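/- Let f : K × K → [−1,1] with K a compact subset of ℝ^k, and suppose f is L-Lipschitz in the sense |f(x,y) − f(x',y')| ≤ L‖x−x'‖ + L‖y−y'‖. Let β_1,…,β_n ∈ K and let M be the n×n matrix with m_{ij} = f(β_i, β_j). If K can be partitioned into N classes each of diameter at most δ/(2L), then ‖M‖_* ≤ n^{3/2}·δ + sqrt(N)·n. -/

import Mathlib

theorem Matrix.isHermitian_transpose_mul_self {m n : ℕ} (A : Matrix (Fin m) (Fin n) ℝ) :
    (Matrix.transpose A * A).IsHermitian := by
  have h := Matrix.isHermitian_conjTranspose_mul_self A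
  rwa [Matrix.conjTranspose_eq_transpose_of_trivial] at h

noncomputable def singularValues {m n : ℕ} (A : Matrix (Fin m) (Fin n) ℝ) : Fin n → ℝ :=
  fun i => Real.sqrt ((Matrix.isHermitian_transpose_mul_self A).eigenvalues i)

noncomputable def nuclearNorm {m n : ℕ} (A : Matrix (Fin m) (Fin n) ℝ) : ℝ :=
  ∑ i, singularValues A i

noncomputable def frobeniusNorm {m n : ℕ} (A : Matrix (Fin m) (Fin n) ℝ) : ℝ :=
  Real.sqrt (∑ i, ∑ j, (A i j)^2)

noncomputable def matrixSpectralNorm {m n : ℕ} (A : Matrix (Fin m) (Fin n) ℝ) : ℝ :=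
  ⨆ i, singularValues A i

/-!
Take an orthonormal basis `b` of eigenvectors of `Aᵀ A`. Then the vectors `A b_j` are pairwise
orthogonal with `‖A b_j‖ = σ_j`, so `‖A‖_* = ∑ ‖A b_j‖`. Normalising the nonzero `A b_j` gives
orthonormal families `u, v` with `∑ ⟪u_j, A v_j⟫ = ‖A‖_*`, while for any orthonormal `u, v` and
any orthonormal basis `b`, Bessel and Cauchy–Schwarz give `∑ ⟪u_k, A v_k⟫ ≤ ∑ ‖A b_j‖`; this
yields the triangle inequality. Cauchy–Schwarz over the nonzero singular values gives
`‖A‖_* ≤ √(rank A) ‖A‖_F`.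

Replacing row `i` of `M` by the row of a fixed representative of the class of `β_i` yields a
matrix `B` of rank at most `N` with entries in `[-1, 1]`, and the Lipschitz bound gives
`|M - B| ≤ δ` entrywise. Apply the rank bound to `B` and to `M - B`.
-/

open Finset Matrix
open scoped RealInnerProductSpace

section InnerProductSpace
variable {E F : Type*} [NormedAddCommGroup E] [InnerProductSpace ℝ E]
  [NormedAddCommGroup F] [InnerProductSpace ℝ F] {ι κ : Type*} [Fintype ι] [Fintype κ]

theorem Orthonormal.sqrt_sum_inner_sq_le {v : κ → E} (hv : Orthonormal ℝ v) (x : E) :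
    √(∑ k, ⟪v k, x⟫ ^ 2) ≤ ‖x‖ := by
  rw [Real.sqrt_le_left (norm_nonneg x)]
  simpa only [Real.norm_eq_abs, sq_abs] using hv.sum_inner_products_le x (s := univ)

theorem Orthonormal.sum_inner_mul_inner_le {u : κ → F} {v : κ → E}
    (hu : Orthonormal ℝ u) (hv : Orthonormal ℝ v) (x : E) (y : F) :
    ∑ k, ⟪x, v k⟫ * ⟪u k, y⟫ ≤ ‖x‖ * ‖y‖ :=
  calc ∑ k, ⟪x, v k⟫ * ⟪u k, y⟫
      ≤ √(∑ k, ⟪v k, x⟫ ^ 2) * √(∑ k, ⟪u k, y⟫ ^ 2) := by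
        simpa only [real_inner_comm x] using Real.sum_mul_le_sqrt_mul_sqrt univ _ _
    _ ≤ ‖x‖ * ‖y‖ := by
        gcongr
        · exact hv.sqrt_sum_inner_sq_le x
        · exact hu.sqrt_sum_inner_sq_le y

theorem sum_inner_apply_le_sum_norm_apply (T : E →ₗ[ℝ] F) (b : OrthonormalBasis ι ℝ E)
    {u : κ → F} {v : κ → E} (hu : Orthonormal ℝ u) (hv : Orthonormal ℝ v) :
    ∑ k, ⟪u k, T (v k)⟫ ≤ ∑ j, ‖T (b j)‖ := by
  have expand (k : κ) : ⟪u k, T (v k)⟫ = ∑ j, ⟪b j, v k⟫ * ⟪u k, T (b j)⟫ := by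
    conv_lhs => rw [← b.sum_repr' (v k)]
    simp only [map_sum, map_smul, inner_sum, real_inner_smul_right]
  calc ∑ k, ⟪u k, T (v k)⟫ = ∑ j, ∑ k, ⟪b j, v k⟫ * ⟪u k, T (b j)⟫ := by
        simp only [expand]; exact sum_comm
    _ ≤ ∑ j, ‖b j‖ * ‖T (b j)‖ := by
        gcongr with j; exact hu.sum_inner_mul_inner_le hv _ _
    _ = ∑ j, ‖T (b j)‖ := by simp only [b.orthonormal.1, one_mul]

theorem exists_orthonormal_sum_inner_apply_eq_sum_norm (T : E →ₗ[ℝ] F)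
    (b : OrthonormalBasis ι ℝ E) (horth : Pairwise fun i j ↦ ⟪T (b i), T (b j)⟫ = 0) :
    ∃ (s : Finset ι) (u : s → F), Orthonormal ℝ u ∧
      ∑ j : s, ⟪u j, T (b j)⟫ = ∑ j, ‖T (b j)‖ := by
  classical
  refine ⟨univ.filter fun j ↦ T (b j) ≠ 0, fun j ↦ ‖T (b j)‖⁻¹ • T (b j), ?_, ?_⟩
  · rw [orthonormal_iff_ite]
    rintro ⟨i, hi⟩ ⟨j, hj⟩
    by_cases hij : i = j
    · subst hij
      have hi : ‖T (b i)‖ ≠ 0 := norm_ne_zero_iff.mpr (mem_filter.mp hi).2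
      rw [if_pos rfl, real_inner_self_eq_norm_sq, norm_smul, norm_inv, norm_norm,
        inv_mul_cancel₀ hi, one_pow]
    · simp [real_inner_smul_left, real_inner_smul_right, horth hij, hij]
  · rw [sum_coe_sort (f := fun j ↦ ⟪‖T (b j)‖⁻¹ • T (b j), T (b j)⟫), sum_filter]
    refine sum_congr rfl fun j _ ↦ ?_
    split_ifs with h
    · rw [real_inner_smul_left, real_inner_self_eq_norm_sq]
      field_simp [norm_ne_zero_iff.mpr h]
    · simp [not_not.mp h]

theorem sum_norm_add_apply_le (T₁ T₂ : E →ₗ[ℝ] F) (b b₁ b₂ : OrthonormalBasis ι ℝ E)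
    (horth : Pairwise fun i j ↦ ⟪(T₁ + T₂) (b i), (T₁ + T₂) (b j)⟫ = 0) :
    ∑ j, ‖(T₁ + T₂) (b j)‖ ≤ ∑ j, ‖T₁ (b₁ j)‖ + ∑ j, ‖T₂ (b₂ j)‖ := by
  obtain ⟨s, u, hu, hsum⟩ := exists_orthonormal_sum_inner_apply_eq_sum_norm (T₁ + T₂) b horth
  have hv : Orthonormal ℝ fun j : s ↦ b j := b.orthonormal.comp _ Subtype.val_injective
  calc ∑ j, ‖(T₁ + T₂) (b j)‖ = ∑ j : s, ⟪u j, T₁ (b j)⟫ + ∑ j : s, ⟪u j, T₂ (b j)⟫ := by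
        rw [← hsum]
        simp only [LinearMap.add_apply, inner_add_right, sum_add_distrib]
    _ ≤ ∑ j, ‖T₁ (b₁ j)‖ + ∑ j, ‖T₂ (b₂ j)‖ :=
        add_le_add (sum_inner_apply_le_sum_norm_apply T₁ b₁ hu hv)
          (sum_inner_apply_le_sum_norm_apply T₂ b₂ hu hv)

end InnerProductSpace

section SingularValues
variable {m n : ℕ} (A : Matrix (Fin m) (Fin n) ℝ)

noncomputable abbrev rightSingularBasis : OrthonormalBasis (Fin n) ℝ (EuclideanSpace ℝ (Fin n)) :=
  (isHermitian_transpose_mul_self A).eigenvectorBasis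

theorem inner_toEuclideanLin_rightSingularBasis (i j : Fin n) :
    ⟪A.toEuclideanLin (rightSingularBasis A i), A.toEuclideanLin (rightSingularBasis A j)⟫ =
      (isHermitian_transpose_mul_self A).eigenvalues j *
        ⟪rightSingularBasis A i, rightSingularBasis A j⟫ := by
  have hj : Aᴴ.toEuclideanLin (A.toEuclideanLin (rightSingularBasis A j)) =
      (isHermitian_transpose_mul_self A).eigenvalues j • rightSingularBasis A j := by
    apply WithLp.ofLp_injective
    simp only [ofLp_toLpLin, toLin'_apply, WithLp.ofLp_smul, mulVec_mulVec,
      conjTranspose_eq_transpose_of_trivial]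
    exact (isHermitian_transpose_mul_self A).mulVec_eigenvectorBasis j
  rw [← LinearMap.adjoint_inner_right, ← toEuclideanLin_conjTranspose_eq_adjoint, hj,
    real_inner_smul_right]

theorem norm_toEuclideanLin_rightSingularBasis (j : Fin n) :
    ‖A.toEuclideanLin (rightSingularBasis A j)‖ = singularValues A j := by
  have h := inner_toEuclideanLin_rightSingularBasis A j j
  rw [real_inner_self_eq_norm_sq, real_inner_self_eq_norm_sq,
    (rightSingularBasis A).orthonormal.1 j, one_pow, mul_one] at h
  rw [singularValues, ← h, Real.sqrt_sq (norm_nonneg _)]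

theorem nuclearNorm_eq_sum_norm :
    nuclearNorm A = ∑ j, ‖A.toEuclideanLin (rightSingularBasis A j)‖ := by
  simp only [norm_toEuclideanLin_rightSingularBasis, nuclearNorm]

theorem pairwise_inner_toEuclideanLin_rightSingularBasis :
    Pairwise fun i j ↦
      ⟪A.toEuclideanLin (rightSingularBasis A i), A.toEuclideanLin (rightSingularBasis A j)⟫ = 0 :=
  fun i j hij ↦ by
    simp only [inner_toEuclideanLin_rightSingularBasis, (rightSingularBasis A).orthonormal.2 hij,
      mul_zero]

theorem nuclearNorm_add_le (B : Matrix (Fin m) (Fin n) ℝ) :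
    nuclearNorm (A + B) ≤ nuclearNorm A + nuclearNorm B := by
  simp only [nuclearNorm_eq_sum_norm, map_add]
  exact sum_norm_add_apply_le _ _ _ _ _ <| by
    simpa only [map_add] using pairwise_inner_toEuclideanLin_rightSingularBasis (A + B)

theorem frobeniusNorm_nonneg : 0 ≤ frobeniusNorm A := Real.sqrt_nonneg _

theorem sum_sq_singularValues : ∑ j, singularValues A j ^ 2 = frobeniusNorm A ^ 2 := by
  have hA := isHermitian_transpose_mul_self A
  calc ∑ j, singularValues A j ^ 2 = ∑ j, hA.eigenvalues j :=
        sum_congr rfl fun j _ ↦ Real.sq_sqrt (eigenvalues_conjTranspose_mul_self_nonneg A j)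
    _ = (Aᵀ * A).trace := by simpa using hA.trace_eq_sum_eigenvalues.symm
    _ = ∑ i, ∑ j, A i j ^ 2 := by
        simp only [trace, diag_apply, mul_apply, transpose_apply, sq]
        exact sum_comm
    _ = frobeniusNorm A ^ 2 := (Real.sq_sqrt (by positivity)).symm

theorem card_singularValues_ne_zero : #{j | singularValues A j ≠ 0} = A.rank := by
  have hA := isHermitian_transpose_mul_self A
  rw [← rank_conjTranspose_mul_self, conjTranspose_eq_transpose_of_trivial,
    hA.rank_eq_card_non_zero_eigs, Fintype.card_subtype]
  congr! 2 with j
  exact not_congr (Real.sqrt_eq_zero (eigenvalues_conjTranspose_mul_self_nonneg A j))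

theorem nuclearNorm_le_sqrt_rank_mul_frobeniusNorm :
    nuclearNorm A ≤ √A.rank * frobeniusNorm A := by
  classical
  set s : Finset (Fin n) := {j | singularValues A j ≠ 0}
  have hs : nuclearNorm A = ∑ j ∈ s, 1 * singularValues A j := by
    simp only [one_mul, s, sum_filter_ne_zero]; rfl
  calc nuclearNorm A = ∑ j ∈ s, 1 * singularValues A j := hs
    _ ≤ √(∑ j ∈ s, 1 ^ 2) * √(∑ j ∈ s, singularValues A j ^ 2) :=
        Real.sum_mul_le_sqrt_mul_sqrt _ _ _
    _ ≤ √A.rank * √(frobeniusNorm A ^ 2) := by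
        gcongr
        · simp [s, card_singularValues_ne_zero]
        · rw [← sum_sq_singularValues]
          exact sum_le_sum_of_subset_of_nonneg (subset_univ s) fun j _ _ ↦ sq_nonneg _
    _ = √A.rank * frobeniusNorm A := by rw [Real.sqrt_sq (frobeniusNorm_nonneg A)]

theorem frobeniusNorm_le_of_abs_le {c : ℝ} (hc : 0 ≤ c) (h : ∀ i j, |A i j| ≤ c) :
    frobeniusNorm A ≤ √(m * n) * c := by
  calc frobeniusNorm A ≤ √(∑ _i : Fin m, ∑ _j : Fin n, c ^ 2) := by
        refine Real.sqrt_le_sqrt (sum_le_sum fun i _ ↦ sum_le_sum fun j _ ↦ ?_)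
        exact sq_le_sq' (abs_le.mp (h i j)).1 (abs_le.mp (h i j)).2
    _ = √(m * n) * c := by
        simp only [sum_const, card_univ, Fintype.card_fin, nsmul_eq_mul]
        rw [← mul_assoc, Real.sqrt_mul (by positivity), Real.sqrt_sq hc]

theorem nuclearNorm_le_of_rank_le_of_abs_le {r : ℕ} {c : ℝ} (hr : A.rank ≤ r) (hc : 0 ≤ c)
    (h : ∀ i j, |A i j| ≤ c) : nuclearNorm A ≤ √r * (√(m * n) * c) :=
  (nuclearNorm_le_sqrt_rank_mul_frobeniusNorm A).trans <|
    mul_le_mul (Real.sqrt_le_sqrt (by exact_mod_cast hr)) (frobeniusNorm_le_of_abs_le A hc h)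
      (Real.sqrt_nonneg _) (Real.sqrt_nonneg _)

end SingularValues

theorem Matrix.exists_rank_le_card_and_row_eq {ι κ τ R : Type*} [Fintype κ] [Fintype τ]
    [CommSemiring R] [StrongRankCondition R] (M : Matrix ι κ R) (c : ι → τ) :
    ∃ B : Matrix ι κ R, B.rank ≤ Fintype.card τ ∧ ∀ i, ∃ i', c i' = c i ∧ B i = M i' := by
  classical
  let rows : Matrix τ κ R := fun t ↦ if h : ∃ i, c i = t then M h.choose else 0
  refine ⟨rows.submatrix c id, (rank_submatrix_le _ _ _).trans (rank_le_card_height _),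
    fun i ↦ ?_⟩
  have h : ∃ i', c i' = c i := ⟨i, rfl⟩
  exact ⟨h.choose, h.choose_spec, dif_pos h⟩

theorem latentSpace_nuclearNorm_le_general {k n N : ℕ}
    (K : Set (EuclideanSpace ℝ (Fin k)))
    (f : EuclideanSpace ℝ (Fin k) → EuclideanSpace ℝ (Fin k) → ℝ)
    (hf1 : ∀ x ∈ K, ∀ y ∈ K, |f x y| ≤ 1)
    (L : ℝ) (hL : 0 < L)
    (hLip : ∀ x ∈ K, ∀ y ∈ K, ∀ x' ∈ K, ∀ y' ∈ K,
      |f x y - f x' y'| ≤ L * ‖x - x'‖ + L * ‖y - y'‖)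
    (δ : ℝ) (hδ : 0 < δ)
    (g : EuclideanSpace ℝ (Fin k) → Fin N)
    (hg : ∀ x ∈ K, ∀ y ∈ K, g x = g y → ‖x - y‖ ≤ δ / (2 * L))
    (β : Fin n → EuclideanSpace ℝ (Fin k)) (hβ : ∀ i, β i ∈ K)
    (M : Matrix (Fin n) (Fin n) ℝ) (hM : ∀ i j, M i j = f (β i) (β j)) :
    nuclearNorm M ≤ (n : ℝ) ^ ((3:ℝ)/2) * δ + Real.sqrt (N : ℝ) * n := by
  obtain ⟨B, hBrank, hBrow⟩ := M.exists_rank_le_card_and_row_eq fun i ↦ g (β i)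
  have hB (i j) : |B i j| ≤ 1 := by
    obtain ⟨i', -, hi'⟩ := hBrow i
    rw [hi', hM]
    exact hf1 _ (hβ i') _ (hβ j)
  have hMB (i j) : |(M - B) i j| ≤ δ := by
    obtain ⟨i', hci', hi'⟩ := hBrow i
    calc |(M - B) i j| = |f (β i) (β j) - f (β i') (β j)| := by rw [Matrix.sub_apply, hi', hM, hM]
      _ ≤ L * ‖β i - β i'‖ + L * ‖β j - β j‖ := hLip _ (hβ i) _ (hβ j) _ (hβ i') _ (hβ j)
      _ ≤ L * (δ / (2 * L)) + 0 := by
          rw [sub_self, norm_zero, mul_zero]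
          gcongr
          exact hg _ (hβ i) _ (hβ i') hci'.symm
      _ ≤ δ := by field_simp; linarith
  have hn : √((n : ℝ) * n) = n := Real.sqrt_mul_self n.cast_nonneg
  calc nuclearNorm M = nuclearNorm (M - B + B) := by rw [sub_add_cancel]
    _ ≤ nuclearNorm (M - B) + nuclearNorm B := nuclearNorm_add_le _ _
    _ ≤ √n * (√(n * n) * δ) + √N * (√(n * n) * 1) :=
        add_le_add (nuclearNorm_le_of_rank_le_of_abs_le _ (rank_le_width _) hδ.le hMB)
          (nuclearNorm_le_of_rank_le_of_abs_le _ (by simpa using hBrank) zero_le_one hB)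
    _ = (n : ℝ) ^ ((3:ℝ)/2) * δ + √N * n := by
        rw [hn, show (3:ℝ)/2 = 1/2 + 1 by norm_num, Real.rpow_add' n.cast_nonneg (by norm_num),
          Real.rpow_one, ← Real.sqrt_eq_rpow]
        ring

theorem latentSpace_nuclearNorm_le {k n N : ℕ}
    (K : Set (EuclideanSpace ℝ (Fin k))) (hK : IsCompact K)
    (f : EuclideanSpace ℝ (Fin k) → EuclideanSpace ℝ (Fin k) → ℝ)
    (hf1 : ∀ x ∈ K, ∀ y ∈ K, |f x y| ≤ 1)
    (L : ℝ) (hL : 0 < L)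
    (hLip : ∀ x ∈ K, ∀ y ∈ K, ∀ x' ∈ K, ∀ y' ∈ K,
      |f x y - f x' y'| ≤ L * ‖x - x'‖ + L * ‖y - y'‖)
    (δ : ℝ) (hδ : 0 < δ)
    (g : EuclideanSpace ℝ (Fin k) → Fin N)
    (hg : ∀ x ∈ K, ∀ y ∈ K, g x = g y → ‖x - y‖ ≤ δ / (2 * L))
    (β : Fin n → EuclideanSpace ℝ (Fin k)) (hβ : ∀ i, β i ∈ K)
    (M : Matrix (Fin n) (Fin n) ℝ) (hM : ∀ i j, M i j = f (β i) (β j)) :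
    nuclearNorm M ≤ (n : ℝ) ^ ((3:ℝ)/2) * δ + Real.sqrt (N : ℝ) * n :=
  latentSpace_nuclearNorm_le_general K f hf1 L hL hLip δ hδ g hg β hβ M hM
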